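/- Single-slot energy transfer for the two-hop channel: let h_1, h_2 > 0, σ_1², σ_2² > 0, α_1, α_2 ∈ [0,1], and π_1, π_2 ≥ 0. Then the maximum over δ_1 ∈ [0, π_1], δ_2 ∈ [0, π_2] of min{ (h_1/σ_2²)(π_1 − δ_1 + α_2 δ_2), (h_2/σ_1²)(π_2 − δ_2 + α_1 δ_1) } equals h_1 h_2 · min{ (π_1 + α_2 π_2)/(α_2 σ_1² h_1 + σ_2² h_2), (α_1 π_1 + π_2)/(σ_1² h_1 + α_1 σ_2² h_2) }, and this maximum is attained at δ_1 = max{0, σ_1² h_1 π_1 − σ_2² h_2 π_2}/(α_1 σ_2² h_2 + σ_1² h_1) and δ_2 = max{0, σ_2² h_2 π_2 − σ_1² h_1 π_1}/(α_2 σ_1² h_1 + σ_2² h_2), which satisfy 0 ≤ δ_k ≤ π_k for k = 1,2. -/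
import Mathlib


/-- Optimal single-slot energy transfer for the two-hop channel:
value of the maximal end-to-end received SNR and the transfers attaining it. -/
theorem stmt_9
    (h1 h2 s1 s2 a1 a2 π1 π2 : ℝ)
    (hh1 : 0 < h1) (hh2 : 0 < h2) (hs1 : 0 < s1) (hs2 : 0 < s2)
    (ha1 : a1 ∈ Set.Icc (0:ℝ) 1) (ha2 : a2 ∈ Set.Icc (0:ℝ) 1)
    (hπ1 : 0 ≤ π1) (hπ2 : 0 ≤ π2) :
    let V := h1 * h2 * min ((π1 + a2 * π2) / (a2 * s1 * h1 + s2 * h2))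
                           ((a1 * π1 + π2) / (s1 * h1 + a1 * s2 * h2))
    let d1s := max 0 (s1 * h1 * π1 - s2 * h2 * π2) / (a1 * s2 * h2 + s1 * h1)
    let d2s := max 0 (s2 * h2 * π2 - s1 * h1 * π1) / (a2 * s1 * h1 + s2 * h2)
    (0 ≤ d1s ∧ d1s ≤ π1) ∧ (0 ≤ d2s ∧ d2s ≤ π2) ∧
    (∀ d1 d2 : ℝ, 0 ≤ d1 → d1 ≤ π1 → 0 ≤ d2 → d2 ≤ π2 →
      min ((h1 / s2) * (π1 - d1 + a2 * d2)) ((h2 / s1) * (π2 - d2 + a1 * d1)) ≤ V) ∧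
    min ((h1 / s2) * (π1 - d1s + a2 * d2s)) ((h2 / s1) * (π2 - d2s + a1 * d1s)) = V := by
  obtain ⟨ha1l, ha1r⟩ := ha1
  obtain ⟨ha2l, ha2r⟩ := ha2
  intro V d1s d2s
  have hVdef : V = h1 * h2 * min ((π1 + a2 * π2) / (a2 * s1 * h1 + s2 * h2))
                           ((a1 * π1 + π2) / (s1 * h1 + a1 * s2 * h2)) := rfl
  have hd1def : d1s = max 0 (s1 * h1 * π1 - s2 * h2 * π2) / (a1 * s2 * h2 + s1 * h1) := rfl
  have hd2def : d2s = max 0 (s2 * h2 * π2 - s1 * h1 * π1) / (a2 * s1 * h1 + s2 * h2) := rfl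
  have hD1 : 0 < a1 * s2 * h2 + s1 * h1 := by positivity
  have hD2 : 0 < a2 * s1 * h1 + s2 * h2 := by positivity
  have hD1' : 0 < s1 * h1 + a1 * s2 * h2 := by positivity
  have ha1a2 : a1 * a2 ≤ 1 := by nlinarith
  refine ⟨⟨?_, ?_⟩, ⟨?_, ?_⟩, ?_, ?_⟩
  · rw [hd1def]; exact div_nonneg (le_max_left _ _) hD1.le
  · rw [hd1def, div_le_iff₀ hD1]
    have h1' : max 0 (s1 * h1 * π1 - s2 * h2 * π2) ≤ s1 * h1 * π1 := by
      apply max_le (by positivity) (by nlinarith [mul_nonneg (mul_nonneg hs2.le hh2.le) hπ2])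
    nlinarith [mul_nonneg (mul_nonneg (mul_nonneg ha1l hs2.le) hh2.le) hπ1]
  · rw [hd2def]; exact div_nonneg (le_max_left _ _) hD2.le
  · rw [hd2def, div_le_iff₀ hD2]
    have h2' : max 0 (s2 * h2 * π2 - s1 * h1 * π1) ≤ s2 * h2 * π2 := by
      apply max_le (by positivity) (by nlinarith [mul_nonneg (mul_nonneg hs1.le hh1.le) hπ1])
    nlinarith [mul_nonneg (mul_nonneg (mul_nonneg ha2l hs1.le) hh1.le) hπ2]
  · -- upper bound
    intro d1 d2 hd1 hd1π hd2 hd2π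
    rw [hVdef]
    set x := (h1 / s2) * (π1 - d1 + a2 * d2) with hxdef
    set y := (h2 / s1) * (π2 - d2 + a1 * d1) with hydef
    have hx' : min x y * s2 ≤ h1 * (π1 - d1 + a2 * d2) := by
      calc min x y * s2 ≤ x * s2 := mul_le_mul_of_nonneg_right (min_le_left _ _) hs2.le
        _ = h1 * (π1 - d1 + a2 * d2) := by rw [hxdef]; field_simp
    have hy' : min x y * s1 ≤ h2 * (π2 - d2 + a1 * d1) := by
      calc min x y * s1 ≤ y * s1 := mul_le_mul_of_nonneg_right (min_le_right _ _) hs1.le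
        _ = h2 * (π2 - d2 + a1 * d1) := by rw [hydef]; field_simp
    have b1 : min x y ≤ h1 * h2 * ((π1 + a2 * π2) / (a2 * s1 * h1 + s2 * h2)) := by
      rw [mul_div_assoc', le_div_iff₀ hD2]
      have f1 := mul_le_mul_of_nonneg_left hx' hh2.le
      have f2 := mul_le_mul_of_nonneg_left hy' (mul_nonneg ha2l hh1.le)
      have f3 : 0 ≤ h1 * h2 * d1 * (1 - a1 * a2) :=
        mul_nonneg (mul_nonneg (mul_nonneg hh1.le hh2.le) hd1) (by linarith)
      linarith [f1, f2, f3]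
    have b2 : min x y ≤ h1 * h2 * ((a1 * π1 + π2) / (s1 * h1 + a1 * s2 * h2)) := by
      rw [mul_div_assoc', le_div_iff₀ hD1']
      have f1 := mul_le_mul_of_nonneg_left hx' (mul_nonneg ha1l hh2.le)
      have f2 := mul_le_mul_of_nonneg_left hy' hh1.le
      have f3 : 0 ≤ h1 * h2 * d2 * (1 - a1 * a2) :=
        mul_nonneg (mul_nonneg (mul_nonneg hh1.le hh2.le) hd2) (by linarith)
      linarith [f1, f2, f3]
    rcases le_total ((π1 + a2 * π2) / (a2 * s1 * h1 + s2 * h2))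
        ((a1 * π1 + π2) / (s1 * h1 + a1 * s2 * h2)) with h | h
    · rw [min_eq_left h]; exact b1
    · rw [min_eq_right h]; exact b2
  · -- attainment
    rw [hVdef, hd1def, hd2def]
    rcases le_total (s1 * h1 * π1) (s2 * h2 * π2) with hle | hle
    · have hmax1 : max 0 (s1 * h1 * π1 - s2 * h2 * π2) = 0 := max_eq_left (by linarith)
      have hmax2 : max 0 (s2 * h2 * π2 - s1 * h1 * π1) = s2 * h2 * π2 - s1 * h1 * π1 :=
        max_eq_right (by linarith)
      rw [hmax1, hmax2]
      have hmin : min ((π1 + a2 * π2) / (a2 * s1 * h1 + s2 * h2))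
          ((a1 * π1 + π2) / (s1 * h1 + a1 * s2 * h2))
          = (π1 + a2 * π2) / (a2 * s1 * h1 + s2 * h2) := by
        apply min_eq_left
        rw [div_le_div_iff₀ hD2 hD1']
        nlinarith [mul_nonneg (sub_nonneg.2 hle) (sub_nonneg.2 ha1a2)]
      rw [hmin]
      have hx_eq : (h1 / s2) * (π1 - 0 / (a1 * s2 * h2 + s1 * h1)
          + a2 * ((s2 * h2 * π2 - s1 * h1 * π1) / (a2 * s1 * h1 + s2 * h2)))
          = h1 * h2 * ((π1 + a2 * π2) / (a2 * s1 * h1 + s2 * h2)) := by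
        field_simp
        ring
      have hy_eq : (h2 / s1) * (π2 - (s2 * h2 * π2 - s1 * h1 * π1) / (a2 * s1 * h1 + s2 * h2)
          + a1 * (0 / (a1 * s2 * h2 + s1 * h1)))
          = h1 * h2 * ((π1 + a2 * π2) / (a2 * s1 * h1 + s2 * h2)) := by
        field_simp
        ring
      rw [hx_eq, hy_eq, min_self]
    · have hmax2 : max 0 (s2 * h2 * π2 - s1 * h1 * π1) = 0 := max_eq_left (by linarith)
      have hmax1 : max 0 (s1 * h1 * π1 - s2 * h2 * π2) = s1 * h1 * π1 - s2 * h2 * π2 :=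
        max_eq_right (by linarith)
      rw [hmax1, hmax2]
      have hmin : min ((π1 + a2 * π2) / (a2 * s1 * h1 + s2 * h2))
          ((a1 * π1 + π2) / (s1 * h1 + a1 * s2 * h2))
          = (a1 * π1 + π2) / (s1 * h1 + a1 * s2 * h2) := by
        apply min_eq_right
        rw [div_le_div_iff₀ hD1' hD2]
        nlinarith [mul_nonneg (sub_nonneg.2 hle) (sub_nonneg.2 ha1a2)]
      rw [hmin]
      have hx_eq : (h1 / s2) * (π1 - (s1 * h1 * π1 - s2 * h2 * π2) / (a1 * s2 * h2 + s1 * h1)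
          + a2 * (0 / (a2 * s1 * h1 + s2 * h2)))
          = h1 * h2 * ((a1 * π1 + π2) / (s1 * h1 + a1 * s2 * h2)) := by
        field_simp
        ring
      have hy_eq : (h2 / s1) * (π2 - 0 / (a2 * s1 * h1 + s2 * h2)
          + a1 * ((s1 * h1 * π1 - s2 * h2 * π2) / (a1 * s2 * h2 + s1 * h1)))
          = h1 * h2 * ((a1 * π1 + π2) / (s1 * h1 + a1 * s2 * h2)) := by
        field_simp
        ring
      rw [hx_eq, hy_eq, min_self]
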